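/- Let m ≥ 1 be a positive integer and let α, β, γ, δ > 0 and D ≥ 0 be real numbers, and set Λ = α + βγ. Then ∫₀^D y^{m-1} e^{-αy} [1 − e^{-β(γy+δ)} ∑_{s=0}^{m-1} (β(γy+δ))^s / s!] dy = (m−1)!/α^m − e^{-αD} ∑_{k=0}^{m-1} ((m−1)!/k!) D^k / α^{m-k} − e^{-βδ} ∑_{s=0}^{m-1} (β^s/s!) δ^s ∑_{k₂=0}^{s} binom(s,k₂) (γ/δ)^{k₂} [ (m−1+k₂)!/Λ^{m+k₂} − e^{-ΛD} ∑_{k=0}^{m-1+k₂} ((m−1+k₂)!/k!) D^k / Λ^{m+k₂-k} ]. -/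

import Mathlib

/-!
Expanding `(β(γy + δ))^s` binomially and merging the exponentials turns the integrand into a
linear combination of `y^n e^{-ay}` with `a = α` or `a = Λ`. Each of these has the explicit
antiderivative `-(n!/a^{n+1}) e^{-ay} ∑_{k ≤ n} (ay)^k/k!`, because `x ↦ e^{-x} ∑_{k ≤ n} x^k/k!`
has derivative `-e^{-x} x^n/n!`.
-/

open Finset Real

noncomputable def expPartialSum (n : ℕ) (x : ℝ) : ℝ :=
  ∑ k ∈ range n, x ^ k / (k.factorial : ℝ)

theorem hasDerivAt_expPartialSum_succ (n : ℕ) (x : ℝ) :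
    HasDerivAt (expPartialSum (n + 1)) (expPartialSum n x) x := by
  have h : HasDerivAt (expPartialSum (n + 1))
      (∑ k ∈ range (n + 1), (k * x ^ (k - 1)) / (k.factorial : ℝ)) x :=
    HasDerivAt.fun_sum fun k _ => (hasDerivAt_pow k x).div_const _
  convert h using 1
  rw [sum_range_succ', expPartialSum]
  simp only [CharP.cast_eq_zero, zero_mul, zero_div, add_zero, add_tsub_cancel_right,
    Nat.factorial_succ, Nat.cast_mul, Nat.cast_succ]
  refine sum_congr rfl fun k _ => ?_
  have : (k.factorial : ℝ) ≠ 0 := by positivity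
  field_simp

theorem hasDerivAt_exp_neg_mul_expPartialSum_succ (n : ℕ) (x : ℝ) :
    HasDerivAt (fun x => exp (-x) * expPartialSum (n + 1) x)
      (-(exp (-x) * (x ^ n / (n.factorial : ℝ)))) x := by
  refine (((hasDerivAt_neg x).exp).mul (hasDerivAt_expPartialSum_succ n x)).congr_deriv ?_
  simp only [expPartialSum, sum_range_succ]
  ring

theorem integral_pow_mul_exp_neg_mul {a : ℝ} (ha : a ≠ 0) (n : ℕ) (D : ℝ) :
    ∫ y in (0 : ℝ)..D, y ^ n * exp (-a * y)
      = n.factorial / a ^ (n + 1) * (1 - exp (-a * D) * expPartialSum (n + 1) (a * D)) := by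
  have hderiv (y : ℝ) : HasDerivAt
      (fun y => -(n.factorial / a ^ (n + 1)) * (exp (-(a * y)) * expPartialSum (n + 1) (a * y)))
      (y ^ n * exp (-a * y)) y := by
    refine (((hasDerivAt_exp_neg_mul_expPartialSum_succ n (a * y)).comp y
      ((hasDerivAt_id y).const_mul a)).const_mul (-(n.factorial / a ^ (n + 1) : ℝ))).congr_deriv ?_
    have : (n.factorial : ℝ) ≠ 0 := by positivity
    field_simp
    ring
  rw [intervalIntegral.integral_eq_sub_of_hasDerivAt (fun y _ => hderiv y)
    (by apply Continuous.intervalIntegrable; fun_prop)]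
  simp [expPartialSum, sum_range_succ', neg_mul]
  ring

theorem factorial_div_pow_mul_expPartialSum {a : ℝ} (ha : a ≠ 0) (n : ℕ) (D : ℝ) :
    n.factorial / a ^ (n + 1) * expPartialSum (n + 1) (a * D)
      = ∑ k ∈ range (n + 1), (n.factorial / k.factorial : ℝ) * D ^ k / a ^ (n + 1 - k) := by
  rw [expPartialSum, mul_sum]
  refine sum_congr rfl fun k hk => ?_
  have hpow : a ^ (n + 1) = a ^ k * a ^ (n + 1 - k) := by
    rw [← pow_add, Nat.add_sub_cancel' (mem_range.mp hk).le]
  have : (k.factorial : ℝ) ≠ 0 := by positivity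
  rw [hpow, mul_pow]
  field_simp

theorem integral_pow_mul_exp_neg_mul_eq_sum {a : ℝ} (ha : a ≠ 0) (n : ℕ) (D : ℝ) :
    ∫ y in (0 : ℝ)..D, y ^ n * exp (-a * y)
      = n.factorial / a ^ (n + 1) - exp (-a * D) *
          ∑ k ∈ range (n + 1), (n.factorial / k.factorial : ℝ) * D ^ k / a ^ (n + 1 - k) := by
  rw [integral_pow_mul_exp_neg_mul ha, ← factorial_div_pow_mul_expPartialSum ha]
  ring

theorem integral_sum_mul_pow_mul_exp_neg_mul {a : ℝ} (ha : a ≠ 0) (c : ℕ → ℝ) (t : Finset ℕ)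
    (n : ℕ) (D : ℝ) :
    ∫ y in (0 : ℝ)..D, ∑ k ∈ t, c k * (y ^ (n + k) * exp (-a * y))
      = ∑ k ∈ t, c k * ((n + k).factorial / a ^ (n + k + 1) - exp (-a * D) *
          ∑ j ∈ range (n + k + 1),
            ((n + k).factorial / j.factorial : ℝ) * D ^ j / a ^ (n + k + 1 - j)) := by
  rw [intervalIntegral.integral_finsetSum
    fun k _ => (by apply Continuous.intervalIntegrable; fun_prop)]
  simp only [intervalIntegral.integral_const_mul, integral_pow_mul_exp_neg_mul_eq_sum ha]

theorem expPartialSum_mul_add {δ : ℝ} (hδ : δ ≠ 0) (m : ℕ) (β γ y : ℝ) :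
    expPartialSum m (β * (γ * y + δ)) = ∑ s ∈ range m, β ^ s / s.factorial * δ ^ s *
      ∑ k ∈ range (s + 1), (s.choose k : ℝ) * (γ / δ) ^ k * y ^ k := by
  refine sum_congr rfl fun s _ => ?_
  have hsplit : γ * y + δ = δ * (γ / δ * y + 1) := by field_simp
  simp only [hsplit, mul_pow, add_pow, one_pow, mul_one, mul_sum, sum_div]
  refine sum_congr rfl fun k _ => ?_
  ring

theorem pow_mul_exp_mul_one_sub_exp_mul_expPartialSum {δ : ℝ} (hδ : δ ≠ 0) (n m : ℕ)
    (α β γ y : ℝ) :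
    y ^ n * exp (-α * y) * (1 - exp (-(β * (γ * y + δ))) * expPartialSum m (β * (γ * y + δ)))
      = y ^ n * exp (-α * y) - exp (-(β * δ)) * ∑ s ∈ range m, β ^ s / s.factorial * δ ^ s *
          ∑ k ∈ range (s + 1),
            (s.choose k : ℝ) * (γ / δ) ^ k * (y ^ (n + k) * exp (-(α + β * γ) * y)) := by
  have hexp : exp (-α * y) * exp (-(β * (γ * y + δ)))
      = exp (-(β * δ)) * exp (-(α + β * γ) * y) := by
    rw [← exp_add, ← exp_add]; ring_nf
  have hsum : ∑ s ∈ range m, β ^ s / s.factorial * δ ^ s * ∑ k ∈ range (s + 1),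
        (s.choose k : ℝ) * (γ / δ) ^ k * (y ^ (n + k) * exp (-(α + β * γ) * y))
      = y ^ n * exp (-(α + β * γ) * y) * expPartialSum m (β * (γ * y + δ)) := by
    simp only [expPartialSum_mul_add hδ, mul_sum, pow_add]
    refine sum_congr rfl fun s _ => sum_congr rfl fun k _ => ?_
    ring
  rw [hsum]
  linear_combination -y ^ n * expPartialSum m (β * (γ * y + δ)) * hexp

theorem inner_integral_I1_closed_form_general (m : ℕ) (hm : 1 ≤ m) (α β γ δ D : ℝ)
    (hα : 0 < α) (hβ : 0 < β) (hγ : 0 < γ) (hδ : 0 < δ)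
    (Λ : ℝ) (hΛ : Λ = α + β * γ) :
    (∫ y in (0:ℝ)..D,
        y ^ (m - 1) * Real.exp (-α * y) *
          (1 - Real.exp (-(β * (γ * y + δ))) *
            ∑ s ∈ Finset.range m, (β * (γ * y + δ)) ^ s / (Nat.factorial s : ℝ)))
      = (Nat.factorial (m - 1) : ℝ) / α ^ m
        - Real.exp (-α * D) *
            ∑ k ∈ Finset.range m,
              ((Nat.factorial (m - 1) : ℝ) / (Nat.factorial k : ℝ)) * D ^ k / α ^ (m - k)
        - Real.exp (-(β * δ)) *
            ∑ s ∈ Finset.range m, (β ^ s / (Nat.factorial s : ℝ)) * δ ^ s *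
              ∑ k₂ ∈ Finset.range (s + 1), (Nat.choose s k₂ : ℝ) * (γ / δ) ^ k₂ *
                ((Nat.factorial (m - 1 + k₂) : ℝ) / Λ ^ (m + k₂)
                  - Real.exp (-Λ * D) *
                      ∑ k ∈ Finset.range (m + k₂),
                        ((Nat.factorial (m - 1 + k₂) : ℝ) / (Nat.factorial k : ℝ)) * D ^ k
                          / Λ ^ (m + k₂ - k)) := by
  have hΛ0 : Λ ≠ 0 := by rw [hΛ]; positivity
  change ∫ y in (0:ℝ)..D, y ^ (m - 1) * exp (-α * y) *
      (1 - exp (-(β * (γ * y + δ))) * expPartialSum m (β * (γ * y + δ))) = _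
  simp only [pow_mul_exp_mul_one_sub_exp_mul_expPartialSum hδ.ne', ← hΛ]
  rw [intervalIntegral.integral_sub (by apply Continuous.intervalIntegrable; fun_prop)
      (by apply Continuous.intervalIntegrable; fun_prop),
    intervalIntegral.integral_const_mul, intervalIntegral.integral_finsetSum
      fun s _ => (by apply Continuous.intervalIntegrable; fun_prop)]
  simp only [intervalIntegral.integral_const_mul, integral_sum_mul_pow_mul_exp_neg_mul hΛ0,
    integral_pow_mul_exp_neg_mul_eq_sum hα.ne', Nat.sub_add_cancel hm,
    show ∀ k, m - 1 + k + 1 = m + k from fun k => by omega]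

/-- Exact evaluation of the inner integral `I₁` of Appendix A (equation (A3)): with `m ≥ 1`,
`α, β, γ, δ > 0`, `D ≥ 0` and `Λ = α + βγ`,
`∫₀ᴰ y^(m-1) e^(-αy) [1 - e^(-β(γy+δ)) ∑_{s<m} (β(γy+δ))^s/s!] dy` equals the stated
closed form. -/
theorem inner_integral_I1_closed_form (m : ℕ) (hm : 1 ≤ m) (α β γ δ D : ℝ)
    (hα : 0 < α) (hβ : 0 < β) (hγ : 0 < γ) (hδ : 0 < δ) (hD : 0 ≤ D)
    (Λ : ℝ) (hΛ : Λ = α + β * γ) :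
    (∫ y in (0:ℝ)..D,
        y ^ (m - 1) * Real.exp (-α * y) *
          (1 - Real.exp (-(β * (γ * y + δ))) *
            ∑ s ∈ Finset.range m, (β * (γ * y + δ)) ^ s / (Nat.factorial s : ℝ)))
      = (Nat.factorial (m - 1) : ℝ) / α ^ m
        - Real.exp (-α * D) *
            ∑ k ∈ Finset.range m,
              ((Nat.factorial (m - 1) : ℝ) / (Nat.factorial k : ℝ)) * D ^ k / α ^ (m - k)
        - Real.exp (-(β * δ)) *
            ∑ s ∈ Finset.range m, (β ^ s / (Nat.factorial s : ℝ)) * δ ^ s *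
              ∑ k₂ ∈ Finset.range (s + 1), (Nat.choose s k₂ : ℝ) * (γ / δ) ^ k₂ *
                ((Nat.factorial (m - 1 + k₂) : ℝ) / Λ ^ (m + k₂)
                  - Real.exp (-Λ * D) *
                      ∑ k ∈ Finset.range (m + k₂),
                        ((Nat.factorial (m - 1 + k₂) : ℝ) / (Nat.factorial k : ℝ)) * D ^ k
                          / Λ ^ (m + k₂ - k)) :=
  inner_integral_I1_closed_form_general m hm α β γ δ D hα hβ hγ hδ Λ hΛ
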